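/- arXiv:1512.00779 — 3 statements merged into one kernel-verified Lean document; each statement's English description precedes it below -/
import Mathlib

section
/- Let k be a positive integer and let W_1, …, W_{2k} be the dipole words defined by W_{2a−1} = ⋄^{2k+5} 1 1 (⋄1)^{a−1} (1⋄) (⋄1)^{k−a} 1 ⋄^{2k+6} and W_{2a} = 1^{2k+6} 0 (⋄⋄)^{k−a} (1⋄) (⋄⋄)^{a−1} ⋄ ⋄ 1^{2k+5} for a ∈ {1,…,k}. If i, j ∈ {1,…,2k} have the same parity (both odd or both even), then f(W_i, Rev(W_j)) ≤ 0. -/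
/-- The alphabet Σ = {0, 1, ⋄} of dipole letters. -/
inductive Dip : Type
  | zero : Dip
  | one : Dip
  | blank : Dip
  deriving DecidableEq

open Dip

/-- The force between a pair of letters: 1 if {x,y} = {0,1}, -1 if x = y ∈ {0,1}, 0 otherwise. -/
def lf : Dip → Dip → ℤ
  | zero, one => 1
  | one, zero => 1
  | zero, zero => -1
  | one, one => -1
  | _, _ => 0

/-- The force between a pair of equal-length words: the sum of letterwise forces. -/
def force (X Y : List Dip) : ℤ := (List.zipWith lf X Y).sum

/-- `n` repetitions of a letter. -/
def rep (n : ℕ) (x : Dip) : List Dip := List.replicate n x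

/-- `n` repetitions of a word. -/
def rep2 (n : ℕ) (p : List Dip) : List Dip := (List.replicate n p).flatten

/-- `W_{2a-1} = ⋄^{2k+5} 1 1 (⋄1)^{a-1} (1⋄) (⋄1)^{k-a} 1 ⋄^{2k+6}`. -/
def Wodd (k a : ℕ) : List Dip :=
  rep (2 * k + 5) blank ++ [one, one] ++ rep2 (a - 1) [blank, one] ++ [one, blank] ++
    rep2 (k - a) [blank, one] ++ [one] ++ rep (2 * k + 6) blank

/-- `W_{2a} = 1^{2k+6} 0 (⋄⋄)^{k-a} (1⋄) (⋄⋄)^{a-1} ⋄ ⋄ 1^{2k+5}`. -/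
def Weven (k a : ℕ) : List Dip :=
  rep (2 * k + 6) one ++ [zero] ++ rep2 (k - a) [blank, blank] ++ [one, blank] ++
    rep2 (a - 1) [blank, blank] ++ [blank, blank] ++ rep (2 * k + 5) one

/-- The word `W i`: `Wodd k a` for `i = 2a-1` odd, `Weven k a` for `i = 2a` even. -/
def Wgen (k i : ℕ) : List Dip :=
  if i % 2 = 1 then Wodd k ((i + 1) / 2) else Weven k (i / 2)

/-!
The odd words contain no `0`, and a force between `0`-free words is `≤ 0`. An even word
splits as `W_{2a} = 1^{2k+5} (10) M (⋄⋄) 1^{2k+5}` with `M` a `0`-free word of length `2k`,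
so `Rev(W_{2b}) = 1^{2k+5} (⋄⋄) M' (01) 1^{2k+5}`: aligned with `W_{2a}`, each `0` faces a `⋄`
and the remaining blocks are again `0`-free.
-/

lemma lf_nonpos {x y : Dip} (hx : x ≠ zero) (hy : y ≠ zero) : lf x y ≤ 0 := by
  cases x <;> cases y <;> simp_all [lf]

lemma lf_blank_right (x : Dip) : lf x blank = 0 := by cases x <;> rfl

lemma lf_blank_left (y : Dip) : lf blank y = 0 := by cases y <;> rfl

lemma force_append {A B C D : List Dip} (h : A.length = C.length) :
    force (A ++ B) (C ++ D) = force A C + force B D := by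
  simp [force, List.zipWith_append h]

lemma force_nonpos_of_forall_mem_zip {X Y : List Dip} (h : ∀ p ∈ X.zip Y, lf p.1 p.2 ≤ 0) :
    force X Y ≤ 0 := by
  unfold force
  rw [← List.map_uncurry_zip_eq_zipWith]
  exact (List.sum_le_card_nsmul _ 0 (List.forall_mem_map.2 h)).trans_eq (smul_zero _)

lemma force_nonpos_of_zero_notMem {X Y : List Dip} (hX : zero ∉ X) (hY : zero ∉ Y) :
    force X Y ≤ 0 :=
  force_nonpos_of_forall_mem_zip fun _ hp =>
    lf_nonpos (fun e => hX (e ▸ (List.of_mem_zip hp).1))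
      (fun e => hY (e ▸ (List.of_mem_zip hp).2))

lemma force_rep_blank_right_nonpos (X : List Dip) (n : ℕ) : force X (rep n blank) ≤ 0 :=
  force_nonpos_of_forall_mem_zip fun p hp => by
    rw [List.eq_of_mem_replicate (List.of_mem_zip hp).2, lf_blank_right]

lemma force_rep_blank_left_nonpos (Y : List Dip) (n : ℕ) : force (rep n blank) Y ≤ 0 :=
  force_nonpos_of_forall_mem_zip fun p hp => by
    rw [List.eq_of_mem_replicate (List.of_mem_zip hp).1, lf_blank_left]

lemma exists_weven_eq_append {k a : ℕ} (ha : 1 ≤ a) (hak : a ≤ k) :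
    ∃ M, zero ∉ M ∧ M.length = 2 * k ∧
      Weven k a =
        rep (2 * k + 5) one ++ ([one, zero] ++ (M ++ ([blank, blank] ++ rep (2 * k + 5) one))) := by
  refine ⟨rep2 (k - a) [blank, blank] ++ [one, blank] ++ rep2 (a - 1) [blank, blank],
    ?_, ?_, ?_⟩
  · simp [rep2]
  · simp [rep2]
    omega
  · simp [Weven, rep, List.replicate_succ']

lemma force_weven_reverse_nonpos {k a b : ℕ} (ha : 1 ≤ a) (hak : a ≤ k) (hb : 1 ≤ b)
    (hbk : b ≤ k) :
    force (Weven k a) (Weven k b).reverse ≤ 0 := by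
  obtain ⟨M, hM, hMlen, hMeq⟩ := exists_weven_eq_append ha hak
  obtain ⟨N, hN, hNlen, hNeq⟩ := exists_weven_eq_append hb hbk
  rw [hMeq, hNeq]
  simp only [List.reverse_append, List.append_assoc, rep, List.reverse_replicate,
    List.reverse_cons, List.reverse_nil, List.nil_append, List.singleton_append]
  rw [force_append (by simp), force_append (by simp), force_append (by simp [hMlen, hNlen]),
    force_append (by simp)]
  have h_ones : force (List.replicate (2 * k + 5) one) (List.replicate (2 * k + 5) one) ≤ 0 :=
    force_nonpos_of_zero_notMem (by simp) (by simp)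
  have h_left : force [one, zero] [blank, blank] ≤ 0 := force_rep_blank_right_nonpos _ 2
  have h_mid : force M N.reverse ≤ 0 := force_nonpos_of_zero_notMem hM (by simpa using hN)
  have h_right : force [blank, blank] [zero, one] ≤ 0 := force_rep_blank_left_nonpos _ 2
  omega

lemma zero_notMem_wodd (k a : ℕ) : zero ∉ Wodd k a := by
  simp [Wodd, rep, rep2]

theorem stmt9_general (k : ℕ) :
    ∀ i ∈ Finset.Icc 1 (2 * k), ∀ j ∈ Finset.Icc 1 (2 * k), i % 2 = j % 2 →
      force (Wgen k i) ((Wgen k j).reverse) ≤ 0 := by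
  intro i hi j hj hij
  simp only [Finset.mem_Icc] at hi hj
  rcases Nat.mod_two_eq_zero_or_one i with hi2 | hi2
  · rw [Wgen, Wgen, if_neg (by omega), if_neg (by omega)]
    exact force_weven_reverse_nonpos (by omega) (by omega) (by omega) (by omega)
  · exact force_nonpos_of_zero_notMem (by simp [Wgen, hi2, zero_notMem_wodd])
      (by simp [Wgen, ← hij, hi2, zero_notMem_wodd])

/-- Same-parity pairs of the warmup words have non-positive force. -/
theorem stmt9 (k : ℕ) (hk : 0 < k) :
    ∀ i ∈ Finset.Icc 1 (2 * k), ∀ j ∈ Finset.Icc 1 (2 * k), i % 2 = j % 2 →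
      force (Wgen k i) ((Wgen k j).reverse) ≤ 0 :=
  stmt9_general k
end

section
/- Let k be a positive integer divisible by 4. Define α(0) = 1⋄, α(1) = ⋄1, β(0) = 1⋄, β(1) = 0⋄, and for a bit word C of length k let M_{α,C} = α(C[1]) α(C[2]) ⋯ α(C[k]) and M_{β,C} = β(C[1]) β(C[2]) ⋯ β(C[k]). Then for all bit words C, D of length k each containing exactly k/2 ones: f(M_{α,C}, Rev(M_{β,Rev(D)})) = k/2 if C = D, and f(M_{α,C}, Rev(M_{β,Rev(D)})) ≤ k/2 − 2 if C ≠ D. -/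
open Dip

/-- `α(0) = 1⋄`, `α(1) = ⋄1`. -/
def amap : Bool → List Dip
  | false => [one, blank]
  | true => [blank, one]

/-- `β(0) = 1⋄`, `β(1) = 0⋄`. -/
def bmap : Bool → List Dip
  | false => [one, blank]
  | true => [zero, blank]

/-- `M_{α,C} = α(C[1]) α(C[2]) ⋯ α(C[k])`. -/
def MA (C : List Bool) : List Dip := (C.map amap).flatten

/-- `M_{β,C} = β(C[1]) β(C[2]) ⋯ β(C[k])`. -/
def MB (C : List Bool) : List Dip := (C.map bmap).flatten

/-!
Both words are concatenations of length-two blocks, and reversing `M_{β,Rev(D)}` reverses the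
block order back and each block `β(d)` into `⋄1` or `⋄0`. So the force is a sum of block forces:
the block pair for bits `(c, d)` contributes `1` if `c = d = 1`, `-1` if `c = 1, d = 0`, and `0`
otherwise. Hence the force is `2N - |C|₁`, where `N` counts the common ones of `C` and `D`. With
`|C|₁ = |D|₁ = k/2` we get `N ≤ k/2`, with equality exactly when `C = D`.
-/

lemma force_append_s14 {X₁ Y₁ : List Dip} (X₂ Y₂ : List Dip) (h : X₁.length = Y₁.length) :
    force (X₁ ++ X₂) (Y₁ ++ Y₂) = force X₁ Y₁ + force X₂ Y₂ := by
  simp [force, List.zipWith_append h]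

lemma MA_cons (c : Bool) (C : List Bool) : MA (c :: C) = amap c ++ MA C := by
  simp [MA]

lemma reverse_MB_reverse_cons (d : Bool) (D : List Bool) :
    (MB (d :: D).reverse).reverse = (bmap d).reverse ++ (MB D.reverse).reverse := by
  simp [MB]

lemma force_MA_reverse_MB_reverse {C D : List Bool} (hlen : C.length ≤ D.length) :
    force (MA C) (MB D.reverse).reverse =
      2 * ((List.zipWith (· && ·) C D).count true : ℤ) - C.count true := by
  induction C generalizing D with
  | nil => simp [force, MA]
  | cons c C ih =>
    cases D with
    | nil => simp at hlen
    | cons d D =>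
      have hblock : (amap c).length = ((bmap d).reverse).length := by
        cases c <;> cases d <;> rfl
      rw [MA_cons, reverse_MB_reverse_cons, force_append_s14 _ _ hblock, ih (by simpa using hlen)]
      cases c <;> cases d <;> simp [force, amap, bmap, lf] <;> ring

lemma count_zipWith_and_le_left (C D : List Bool) :
    (List.zipWith (· && ·) C D).count true ≤ C.count true := by
  induction C generalizing D with
  | nil => simp
  | cons c C ih =>
    cases D with
    | nil => simp
    | cons d D =>
      have := ih D
      cases c <;> cases d <;> simp <;> omega

lemma count_zipWith_and_le_right (C D : List Bool) :
    (List.zipWith (· && ·) C D).count true ≤ D.count true := by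
  rw [List.zipWith_comm]
  simpa only [Bool.and_comm] using count_zipWith_and_le_left D C

lemma eq_of_count_zipWith_and {C D : List Bool} (hlen : C.length = D.length)
    (hC : (List.zipWith (· && ·) C D).count true = C.count true)
    (hD : (List.zipWith (· && ·) C D).count true = D.count true) : C = D := by
  induction C generalizing D with
  | nil => cases D <;> simp_all
  | cons c C ih =>
    cases D with
    | nil => simp at hlen
    | cons d D =>
      have hleC := count_zipWith_and_le_left C D
      have hleD := count_zipWith_and_le_right C D
      cases c <;> cases d <;> simp at hlen hC hD
      · exact congrArg _ (ih hlen hC hD)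
      · omega
      · omega
      · exact congrArg _ (ih hlen (by omega) (by omega))

theorem stmt14_general (k : ℕ) (C D : List Bool)
    (hC : C.length = k) (hD : D.length = k)
    (hCc : C.count true = k / 2) (hDc : D.count true = k / 2) :
    (C = D → force (MA C) ((MB D.reverse).reverse) = ((k / 2 : ℕ) : ℤ)) ∧
    (C ≠ D → force (MA C) ((MB D.reverse).reverse) ≤ ((k / 2 : ℕ) : ℤ) - 2) := by
  have hlen : C.length = D.length := hC.trans hD.symm
  rw [force_MA_reverse_MB_reverse hlen.le, hCc]
  have hleC := count_zipWith_and_le_left C D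
  have hleD := count_zipWith_and_le_right C D
  refine ⟨?_, fun hne => ?_⟩
  · rintro rfl
    have hself : (List.zipWith (· && ·) C C).count true = C.count true := by simp
    omega
  · have hcommon : (List.zipWith (· && ·) C D).count true ≠ k / 2 := fun h =>
      hne (eq_of_count_zipWith_and hlen (h.trans hCc.symm) (h.trans hDc.symm))
    omega

/-- For balanced bit words `C`, `D` of length `k` (with `4 ∣ k`):
`f(M_{α,C}, Rev(M_{β,Rev(D)}))` equals `k/2` if `C = D` and is at most `k/2 - 2`
otherwise. -/
theorem stmt14 (k : ℕ) (hk : 0 < k) (h4 : 4 ∣ k) (C D : List Bool)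
    (hC : C.length = k) (hD : D.length = k)
    (hCc : C.count true = k / 2) (hDc : D.count true = k / 2) :
    (C = D → force (MA C) ((MB D.reverse).reverse) = ((k / 2 : ℕ) : ℤ)) ∧
    (C ≠ D → force (MA C) ((MB D.reverse).reverse) ≤ ((k / 2 : ℕ) : ℤ) - 2) :=
  stmt14_general k C D hC hD hCc hDc
end

section
/- Let g be a k-glue function and let g′ be the 2k-glue function defined by g′(i,j) = g(i, j−k) if i ≤ k < j, g′(i,j) = g(i−k, j) if j ≤ k < i, and g′(i,j) = 0 otherwise (so the bond graph of g′ is bipartite). Suppose W_1, …, W_{2k} are dipole words of common length L such that for all i, j ∈ {1,…,2k}, f(W_i, Rev(W_j)) > 0 if and only if g′(i,j) > 0. Define V_i = W_i ⋄^L W_{i+k} for i ∈ {1,…,k} (each of length 3L). Then for all i, j ∈ {1,…,k}, f(V_i, Rev(V_j)) > 0 if and only if g(i,j) > 0. -/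
open Dip

/-- The bipartite `2k`-glue function `g'` obtained from the `k`-glue function `g`. -/
def gPrime (g : ℕ → ℕ → ℤ) (k : ℕ) (i j : ℕ) : ℤ :=
  if i ≤ k ∧ k < j then g i (j - k)
  else if j ≤ k ∧ k < i then g (i - k) j
  else 0

lemma force_append_s19 {X Y Z T : List Dip} (h : X.length = Z.length) :
    force (X ++ Y) (Z ++ T) = force X Z + force Y T := by
  simp [force, List.zipWith_append h]

lemma force_replicate_blank_left (n : ℕ) (Y : List Dip) :
    force (List.replicate n Dip.blank) Y = 0 := by
  induction n generalizing Y with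
  | zero => simp [force]
  | succ n ih =>
    cases Y with
    | nil => simp [force]
    | cons y Y => simpa [force, List.replicate_succ, lf] using ih Y

lemma force_append_replicate_blank_append_reverse {A B C D : List Dip} (L : ℕ)
    (h : A.length = D.length) :
    force (A ++ List.replicate L Dip.blank ++ B)
        ((C ++ List.replicate L Dip.blank ++ D).reverse) =
      force A D.reverse + force B C.reverse := by
  have hrev : (C ++ List.replicate L Dip.blank ++ D).reverse
      = D.reverse ++ List.replicate L Dip.blank ++ C.reverse := by
    simp [List.reverse_append]
  rw [hrev, force_append_s19 (by simp [h]), force_append_s19 (by simp [h]),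
    force_replicate_blank_left, add_zero]

lemma gPrime_add_right {g : ℕ → ℕ → ℤ} {k i j : ℕ} (hi : i ≤ k) (hj : 0 < j) :
    gPrime g k i (j + k) = g i j := by
  rw [gPrime, if_pos ⟨hi, by omega⟩, Nat.add_sub_cancel]

lemma gPrime_add_left {g : ℕ → ℕ → ℤ} {k i j : ℕ} (hi : 0 < i) (hj : j ≤ k) :
    gPrime g k (i + k) j = g i j := by
  rw [gPrime, if_neg (by omega), if_pos ⟨hj, by omega⟩, Nat.add_sub_cancel]

theorem stmt19_general (k : ℕ) (g : ℕ → ℕ → ℤ)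
    (L : ℕ) (W : ℕ → List Dip)
    (hlen : ∀ i ∈ Finset.Icc 1 (2 * k), (W i).length = L)
    (henc : ∀ i ∈ Finset.Icc 1 (2 * k), ∀ j ∈ Finset.Icc 1 (2 * k),
      (0 < force (W i) ((W j).reverse) ↔ 0 < gPrime g k i j)) :
    ∀ i ∈ Finset.Icc 1 k, ∀ j ∈ Finset.Icc 1 k,
      (0 < force (W i ++ List.replicate L Dip.blank ++ W (i + k))
          ((W j ++ List.replicate L Dip.blank ++ W (j + k)).reverse) ↔ 0 < g i j) := by
  intro i hi j hj
  simp only [Finset.mem_Icc] at hi hj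
  have hi' : i ∈ Finset.Icc 1 (2 * k) := Finset.mem_Icc.2 ⟨hi.1, by omega⟩
  have hik : i + k ∈ Finset.Icc 1 (2 * k) := Finset.mem_Icc.2 ⟨by omega, by omega⟩
  have hj' : j ∈ Finset.Icc 1 (2 * k) := Finset.mem_Icc.2 ⟨hj.1, by omega⟩
  have hjk : j + k ∈ Finset.Icc 1 (2 * k) := Finset.mem_Icc.2 ⟨by omega, by omega⟩
  have front := henc i hi' (j + k) hjk
  have back := henc (i + k) hik j hj'
  rw [gPrime_add_right hi.2 hj.1] at front
  rw [gPrime_add_left hi.1 hj.2] at back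
  rw [force_append_replicate_blank_append_reverse L (by rw [hlen i hi', hlen (j + k) hjk])]
  omega

/-- Concatenating the signed pairs `Wᵢ ⋄^L W_{i+k}` turns an attraction pattern for `g'`
into one for `g`. -/
theorem stmt19 (k : ℕ) (hk : 0 < k) (g : ℕ → ℕ → ℤ)
    (hsym : ∀ i ∈ Finset.Icc 1 k, ∀ j ∈ Finset.Icc 1 k, g i j = g j i)
    (L : ℕ) (W : ℕ → List Dip)
    (hlen : ∀ i ∈ Finset.Icc 1 (2 * k), (W i).length = L)
    (henc : ∀ i ∈ Finset.Icc 1 (2 * k), ∀ j ∈ Finset.Icc 1 (2 * k),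
      (0 < force (W i) ((W j).reverse) ↔ 0 < gPrime g k i j)) :
    ∀ i ∈ Finset.Icc 1 k, ∀ j ∈ Finset.Icc 1 k,
      (0 < force (W i ++ List.replicate L Dip.blank ++ W (i + k))
          ((W j ++ List.replicate L Dip.blank ++ W (j + k)).reverse) ↔ 0 < g i j) :=
  stmt19_general k g L W hlen henc
end
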